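/- arXiv:2411.12342 — 2 statements merged into one kernel-verified Lean document; each statement's English description precedes it below -/
import Mathlib

section
/- For a real number ω_max with π < ω_max < 2π and any ω with 0 ≤ ω < 2π, the inequality cos(ω) + tan(ω_max/2)·sin(ω) ≤ 1 holds if and only if ω ∈ [0, ω_max]. -/
open Real

theorem stmt_0 (ωmax ω : ℝ) (h1 : π < ωmax) (h2 : ωmax < 2 * π)
    (h3 : 0 ≤ ω) (h4 : ω < 2 * π) :
    Real.cos ω + Real.tan (ωmax / 2) * Real.sin ω ≤ 1 ↔ ω ≤ ωmax := by
  have hπ := Real.pi_pos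
  rcases eq_or_lt_of_le h3 with h0 | h0
  · subst h0
    simp
    linarith
  · have hcosb : Real.cos (ωmax / 2) < 0 :=
      Real.cos_neg_of_pi_div_two_lt_of_lt (by linarith) (by linarith)
    have hsina : 0 < Real.sin (ω / 2) :=
      Real.sin_pos_of_pos_of_lt_pi (by linarith) (by linarith)
    have hcosbne : Real.cos (ωmax / 2) ≠ 0 := ne_of_lt hcosb
    have hsω : Real.sin ω = 2 * Real.sin (ω / 2) * Real.cos (ω / 2) := by
      rw [← Real.sin_two_mul]; ring_nf
    have hcω : Real.cos ω = 1 - 2 * Real.sin (ω / 2) ^ 2 := by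
      have := Real.cos_two_mul (ω / 2)
      have hs := Real.sin_sq_add_cos_sq (ω / 2)
      have : Real.cos (2 * (ω / 2)) = 1 - 2 * Real.sin (ω / 2) ^ 2 := by nlinarith
      rw [← this]; ring_nf
    have heq : Real.cos ω + Real.tan (ωmax / 2) * Real.sin ω - 1 =
        2 * Real.sin (ω / 2) * Real.sin ((ωmax - ω) / 2) / Real.cos (ωmax / 2) := by
      have hsub : (ωmax - ω) / 2 = ωmax / 2 - ω / 2 := by ring
      rw [hsub, Real.sin_sub, Real.tan_eq_sin_div_cos, hsω, hcω]
      field_simp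
      ring
    constructor
    · intro h
      by_contra hc
      push_neg at hc
      have hneg : Real.sin ((ωmax - ω) / 2) < 0 := by
        apply Real.sin_neg_of_neg_of_neg_pi_lt <;> linarith
      have : 0 < 2 * Real.sin (ω / 2) * Real.sin ((ωmax - ω) / 2) / Real.cos (ωmax / 2) := by
        apply div_pos_of_neg_of_neg _ hcosb
        nlinarith
      linarith
    · intro h
      have hnn : 0 ≤ Real.sin ((ωmax - ω) / 2) :=
        Real.sin_nonneg_of_nonneg_of_le_pi (by linarith) (by linarith)
      have : 2 * Real.sin (ω / 2) * Real.sin ((ωmax - ω) / 2) / Real.cos (ωmax / 2) ≤ 0 := by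
        apply div_nonpos_of_nonneg_of_nonpos
        · nlinarith
        · linarith
      linarith
end

section
/- For ω_max ∈ (π, 2π), the set {exp(i·ω) : ω ∈ [0, ω_max]} equals the set of unit-modulus complex numbers z satisfying Re(z) + tan(ω_max/2)·Im(z) ≤ 1. -/
/-!
Put `θ = ωmax / 2`, so `cos θ < 0`. Multiplying the constraint by `cos θ` turns it into
`cos θ ≤ Re (z e^{-iθ})`: rotated by `-θ`, the half-plane cuts the unit circle in the arc
`|arg| ≤ θ` around `1`, since `cos` is decreasing on `[0, π]`. Rotating back gives the arc of
angles `[0, 2θ] = [0, ωmax]`.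
-/

open Real

theorem add_tan_mul_le_one_iff {θ x y : ℝ} (hθ : cos θ < 0) :
    x + tan θ * y ≤ 1 ↔ cos θ ≤ x * cos θ + y * sin θ := by
  have hcomb : x * cos θ + y * sin θ = (x + tan θ * y) * cos θ := by
    rw [tan_eq_sin_div_cos]
    field_simp [hθ.ne]
  rw [hcomb, ← mul_le_mul_right_of_neg hθ, one_mul]

namespace Complex

theorem exists_mem_Icc_neg_exp_eq_iff {θ : ℝ} (h0 : 0 ≤ θ) (hθ : θ ≤ π) {w : ℂ} :
    (∃ ω ∈ Set.Icc (-θ) θ, w = exp (ω * I)) ↔ ‖w‖ = 1 ∧ Real.cos θ ≤ w.re := by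
  constructor
  · rintro ⟨ω, hω, rfl⟩
    refine ⟨norm_exp_ofReal_mul_I ω, ?_⟩
    rw [exp_ofReal_mul_I_re, ← Real.cos_abs ω]
    exact Real.cos_le_cos_of_nonneg_of_le_pi (abs_nonneg ω) hθ (abs_le.2 hω)
  · rintro ⟨hw, hre⟩
    have hw0 : w ≠ 0 := norm_ne_zero_iff.1 (by rw [hw]; exact one_ne_zero)
    have harg : Real.cos θ ≤ Real.cos |arg w| := by
      rwa [Real.cos_abs, cos_arg hw0, hw, div_one]
    rw [Real.strictAntiOn_cos.le_iff_ge ⟨h0, hθ⟩ ⟨abs_nonneg _, abs_arg_le_pi w⟩] at harg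
    refine ⟨arg w, abs_le.1 harg, ?_⟩
    simpa [hw] using (norm_mul_exp_arg_mul_I w).symm

theorem exists_mem_Icc_exp_eq_iff {α θ : ℝ} (h0 : 0 ≤ θ) (hθ : θ ≤ π) {z : ℂ} :
    (∃ ω ∈ Set.Icc (α - θ) (α + θ), z = exp (ω * I)) ↔
      ‖z‖ = 1 ∧ Real.cos θ ≤ z.re * Real.cos α + z.im * Real.sin α := by
  set w := z * exp ((-α : ℝ) * I)
  have hnorm : ‖w‖ = ‖z‖ := by rw [norm_mul, norm_exp_ofReal_mul_I, mul_one]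
  have hre : w.re = z.re * Real.cos α + z.im * Real.sin α := by
    simp only [w, mul_re, exp_ofReal_mul_I_re, exp_ofReal_mul_I_im, Real.cos_neg, Real.sin_neg]
    ring
  have hshift (ω : ℝ) : z = exp (ω * I) ↔ w = exp ((ω - α : ℝ) * I) := by
    rw [ofReal_sub, sub_mul, sub_eq_add_neg, exp_add, ← neg_mul, ← ofReal_neg,
      mul_left_inj' (exp_ne_zero _)]
  rw [← hnorm, ← hre, ← exists_mem_Icc_neg_exp_eq_iff h0 hθ]
  constructor
  · rintro ⟨ω, ⟨hωl, hωu⟩, hz⟩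
    exact ⟨ω - α, ⟨by linarith, by linarith⟩, (hshift ω).1 hz⟩
  · rintro ⟨ω, ⟨hωl, hωu⟩, hw⟩
    refine ⟨ω + α, ⟨by linarith, by linarith⟩, (hshift _).2 ?_⟩
    rwa [add_sub_cancel_right]

end Complex

theorem stmt_18 (ωmax : ℝ) (h1 : π < ωmax) (h2 : ωmax < 2 * π) :
    {z : ℂ | ∃ ω ∈ Set.Icc (0 : ℝ) ωmax, z = Complex.exp (Complex.I * ω)} =
      {z : ℂ | ‖z‖ = 1 ∧ z.re + Real.tan (ωmax / 2) * z.im ≤ 1} := by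
  set θ := ωmax / 2 with hθ
  have hθπ : π / 2 < θ ∧ θ < π := ⟨by linarith, by linarith⟩
  have hcos : cos θ < 0 := cos_neg_of_pi_div_two_lt_of_lt hθπ.1 (by linarith)
  have hIcc : Set.Icc (0 : ℝ) ωmax = Set.Icc (θ - θ) (θ + θ) := by
    rw [sub_self, add_halves]
  ext z
  simp only [Set.mem_ofPred_eq, mul_comm Complex.I, hIcc, add_tan_mul_le_one_iff hcos]
  exact Complex.exists_mem_Icc_exp_eq_iff (by linarith) hθπ.2.le
end
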